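/- arXiv:1508.06754 — 4 statements merged into one kernel-verified Lean document; each statement's English description precedes it below -/
import Mathlib

section
/- For every n ≥ 2 one has f'_{2n+1} = f_{2n}·f'_{2n-1} and f_{2n+2} = f_{2n}·f'_{2n+1}. -/
/-- The finite Fibonacci words over the alphabet {0,1}: f 1 = 1, f 2 = 0,
and f n = f (n-1) ++ f (n-2) for n ≥ 3. -/
def fibWord : ℕ → List ℕ
  | 0 => []
  | 1 => [1]
  | 2 => [0]
  | n + 3 => fibWord (n + 2) ++ fibWord (n + 1)

/-- The co-Fibonacci word f' n = f (n-2) ++ f (n-1), for n ≥ 3. -/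
def coFibWord (n : ℕ) : List ℕ := fibWord (n - 2) ++ fibWord (n - 1)

theorem fibWord_add_three (k : ℕ) : fibWord (k + 3) = fibWord (k + 2) ++ fibWord (k + 1) := rfl

theorem coFibWord_add_three (k : ℕ) : coFibWord (k + 3) = fibWord (k + 1) ++ fibWord (k + 2) := rfl

theorem fibWord_add_four (k : ℕ) : fibWord (k + 4) = fibWord (k + 2) ++ coFibWord (k + 3) := by
  rw [fibWord_add_three, fibWord_add_three, coFibWord_add_three, List.append_assoc]

theorem coFibWord_add_five (k : ℕ) :
    coFibWord (k + 5) = fibWord (k + 4) ++ coFibWord (k + 3) := by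
  show fibWord (k + 3) ++ fibWord (k + 4) = fibWord (k + 4) ++ (fibWord (k + 1) ++ fibWord (k + 2))
  rw [fibWord_add_four, fibWord_add_three, coFibWord_add_three]
  simp only [List.append_assoc]

theorem stmt4 (n : ℕ) (hn : 2 ≤ n) :
    coFibWord (2 * n + 1) = fibWord (2 * n) ++ coFibWord (2 * n - 1) ∧
    fibWord (2 * n + 2) = fibWord (2 * n) ++ coFibWord (2 * n + 1) := by
  obtain ⟨m, rfl⟩ := Nat.exists_eq_add_of_le' hn
  rw [show 2 * (m + 2) = 2 * m + 4 by ring]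
  exact ⟨coFibWord_add_five (2 * m), fibWord_add_four (2 * m + 2)⟩
end

section
/- For every n ≥ 4 one has f̂_n = f̂_{n-2}·f̂_{n-3}·f̂_{n-2}. -/
/-- The left rotation of a word w₁⋯w_k is w_k w₁⋯w_{k-1}. -/
def leftRot (w : List ℕ) : List ℕ :=
  match w.getLast? with
  | none => []
  | some a => a :: w.dropLast

/-- The singular word f̂ n: the left rotation of f n with its first letter
complemented (0 and 1 exchanged). -/
def singWord (n : ℕ) : List ℕ :=
  match leftRot (fibWord n) with
  | [] => []
  | a :: t => (1 - a) :: t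

lemma fib_ne_nil : ∀ n, 1 ≤ n → fibWord n ≠ []
  | 1, _ => by simp [fibWord]
  | 2, _ => by simp [fibWord]
  | n + 3, _ => by
      simp only [fibWord, ne_eq, List.append_eq_nil_iff, not_and]
      exact fun _ => fib_ne_nil (n + 1) (by omega)

lemma fib_last : ∀ n, 1 ≤ n → (fibWord n).getLast? = some (n % 2)
  | 1, _ => by simp [fibWord]
  | 2, _ => by simp [fibWord]
  | n + 3, _ => by
      show (fibWord (n + 2) ++ fibWord (n + 1)).getLast? = _
      rw [List.getLast?_append_of_ne_nil _ (fib_ne_nil (n + 1) (by omega)),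
        fib_last (n + 1) (by omega)]
      congr 1
      omega

lemma sing_eq (n : ℕ) (h : 1 ≤ n) :
    singWord n = ((n + 1) % 2) :: (fibWord n).dropLast := by
  unfold singWord leftRot
  rw [fib_last n h]
  have : 1 - n % 2 = (n + 1) % 2 := by omega
  simp [this]

lemma fib_split (n : ℕ) (h : 1 ≤ n) :
    fibWord n = (fibWord n).dropLast ++ [n % 2] :=
  (List.dropLast_append_getLast? _ (by rw [fib_last n h]; rfl)).symm

theorem stmt8 (n : ℕ) (hn : 4 ≤ n) :
    singWord n = singWord (n - 2) ++ singWord (n - 3) ++ singWord (n - 2) := by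
  obtain ⟨m, rfl⟩ : ∃ m, n = m + 4 := ⟨n - 4, by omega⟩
  have h2 : m + 4 - 2 = m + 2 := by omega
  have h3 : m + 4 - 3 = m + 1 := by omega
  rw [h2, h3, sing_eq (m + 4) (by omega), sing_eq (m + 2) (by omega),
    sing_eq (m + 1) (by omega)]
  have e4 : fibWord (m + 4) = fibWord (m + 2) ++ fibWord (m + 1) ++ fibWord (m + 2) := by
    show fibWord (m + 1 + 3) = _
    rw [fibWord]
    show fibWord (m + 3) ++ _ = _
    rw [fibWord]
  have hd : (fibWord (m + 4)).dropLast
      = fibWord (m + 2) ++ fibWord (m + 1) ++ (fibWord (m + 2)).dropLast := by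
    rw [e4, List.dropLast_append_of_ne_nil (fib_ne_nil (m + 2) (by omega))]
  have hm : (m + 4 + 1) % 2 = (m + 2 + 1) % 2 := by omega
  rw [hd, hm, fib_split (m + 2) (by omega), fib_split (m + 1) (by omega)]
  have hm1 : (m + 2) % 2 = (m + 1 + 1) % 2 := by omega
  have hm2 : (m + 1) % 2 = (m + 2 + 1) % 2 := by omega
  rw [hm1, hm2]
  simp
end

section
/- For every n ≥ 2 one has c_{2n+1} = c_{2n}·c_{2n-1} and c_{2n+2} = c_{2n}·c_{2n+1}, and consequently for the reversals, rev(c_{2n+1}) = rev(c_{2n-1})·rev(c_{2n}) and rev(c_{2n+2}) = rev(c_{2n+1})·rev(c_{2n}). -/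
/-- The central word p n: the Fibonacci word f n with its last two letters removed. -/
def centralWord (n : ℕ) : List ℕ := (fibWord n).dropLast.dropLast

/-- The lower Christoffel word c n = 0 · p n · 1, for n ≥ 3. -/
def chrisWord (n : ℕ) : List ℕ := [0] ++ centralWord n ++ [1]

/-!
Since `f (n+2) = f (n+1) · f n` and `f n` has length `fib n ≥ 2` for `n ≥ 3`, deleting the last
two letters gives `p (n+2) = f (n+1) · p n`; by induction also `p (n+2) = f n · p (n+1)`.
For even `n ≥ 4` the word `f n` ends in `10`, i.e. `f n = p n · 10`, so these identities become
`p (2n+1) = p (2n) · 10 · p (2n-1)` and `p (2n+2) = p (2n) · 10 · p (2n+1)`; framing with `0 … 1`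
turns them into the claimed factorizations of Christoffel words, and reversing gives the rest.
-/

theorem List.dropLast_dropLast_append {α : Type*} (u : List α) {v : List α}
    (hv : 2 ≤ v.length) : (u ++ v).dropLast.dropLast = u ++ v.dropLast.dropLast := by
  have hv₁ : v ≠ [] := List.ne_nil_of_length_pos (by omega)
  have hv₂ : v.dropLast ≠ [] := List.ne_nil_of_length_pos (by rw [List.length_dropLast]; omega)
  rw [List.dropLast_append_of_ne_nil hv₁, List.dropLast_append_of_ne_nil hv₂]

theorem fibWord_add_two {n : ℕ} (hn : n ≠ 0) :
    fibWord (n + 2) = fibWord (n + 1) ++ fibWord n := by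
  obtain ⟨k, rfl⟩ := Nat.exists_eq_succ_of_ne_zero hn
  rfl

theorem length_fibWord : ∀ n, (fibWord n).length = Nat.fib n
  | 0 => rfl
  | 1 => rfl
  | 2 => rfl
  | n + 3 => by
    rw [fibWord, List.length_append, length_fibWord (n + 2), length_fibWord (n + 1), add_comm]
    exact (Nat.fib_add_two (n := n + 1)).symm

theorem centralWord_add_two {n : ℕ} (hn : 3 ≤ n) :
    centralWord (n + 2) = fibWord (n + 1) ++ centralWord n := by
  have hlen : 2 ≤ (fibWord n).length := by
    rw [length_fibWord]
    exact Nat.fib_mono hn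
  rw [centralWord, fibWord_add_two (by omega), List.dropLast_dropLast_append _ hlen, centralWord]

theorem fibWord_add_one_append_centralWord {n : ℕ} (hn : 3 ≤ n) :
    fibWord (n + 1) ++ centralWord n = fibWord n ++ centralWord (n + 1) := by
  induction n, hn using Nat.le_induction with
  | base => rfl
  | succ n hn ih =>
    rw [fibWord_add_two (by omega), List.append_assoc, ← ih, ← centralWord_add_two hn]

theorem centralWord_add_two_eq_fibWord_append {n : ℕ} (hn : 3 ≤ n) :
    centralWord (n + 2) = fibWord n ++ centralWord (n + 1) := by
  rw [centralWord_add_two hn, fibWord_add_one_append_centralWord hn]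

theorem fibWord_two_mul {n : ℕ} (hn : 2 ≤ n) :
    fibWord (2 * n) = centralWord (2 * n) ++ [1, 0] := by
  induction n, hn using Nat.le_induction with
  | base => rfl
  | succ n hn ih =>
    rw [Nat.mul_succ, centralWord_add_two (by omega), fibWord_add_two (by omega),
      List.append_assoc, ← ih]

theorem chrisWord_eq_append {a b c : ℕ}
    (h : centralWord c = centralWord a ++ [1, 0] ++ centralWord b) :
    chrisWord c = chrisWord a ++ chrisWord b := by
  simp [chrisWord, h]

theorem stmt10 (n : ℕ) (hn : 2 ≤ n) :
    chrisWord (2 * n + 1) = chrisWord (2 * n) ++ chrisWord (2 * n - 1) ∧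
    chrisWord (2 * n + 2) = chrisWord (2 * n) ++ chrisWord (2 * n + 1) ∧
    (chrisWord (2 * n + 1)).reverse =
      (chrisWord (2 * n - 1)).reverse ++ (chrisWord (2 * n)).reverse ∧
    (chrisWord (2 * n + 2)).reverse =
      (chrisWord (2 * n + 1)).reverse ++ (chrisWord (2 * n)).reverse := by
  have hodd : chrisWord (2 * n + 1) = chrisWord (2 * n) ++ chrisWord (2 * n - 1) := by
    apply chrisWord_eq_append
    obtain ⟨k, hk⟩ : ∃ k, 2 * n = k + 1 := ⟨2 * n - 1, by omega⟩
    rw [← fibWord_two_mul hn, hk, Nat.add_sub_cancel, centralWord_add_two (by omega)]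
  have heven : chrisWord (2 * n + 2) = chrisWord (2 * n) ++ chrisWord (2 * n + 1) := by
    apply chrisWord_eq_append
    rw [← fibWord_two_mul hn, centralWord_add_two_eq_fibWord_append (by omega)]
  refine ⟨hodd, heven, ?_, ?_⟩
  · rw [hodd, List.reverse_append]
  · rw [heven, List.reverse_append]
end

section
/- For every N ≥ 2, the word 0·rev(c_4)·rev(c_6)⋯rev(c_{2N}) (the letter 0 followed by the concatenation of the even-indexed upper Christoffel words) is a prefix of the Fibonacci infinite word f. In other words, f = 0·∏_{n≥2} rev(c_{2n}). -/
/-- A finite word is a prefix of the Fibonacci infinite word iff it is a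
prefix of some finite Fibonacci word f m with m ≥ 2. -/
def IsFibPrefix (x : List ℕ) : Prop := ∃ m, 2 ≤ m ∧ x <+: fibWord m

/-!
Write `f n` for `fibWord n` and `p n` for `centralWord n`. From `p (n+2) = f (n+1) · p n`
one gets `f n · p (n+1) = f (n+1) · p n`, and `f n = p n · ab` where the suffix `ab` alternates
between `01` (odd `n`) and `10` (even `n`). Reversing `p (n+2) = p (n+1) · ab · p n = p n · ba · p (n+1)`
shows by induction that every `p n` is a palindrome, so `rev (c n) = 1 · p n · 0`. Hence
`f (2k+3)` minus its last letter, followed by `rev (c (2k+4))`, is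
`p (2k+3) · 01 · p (2k+4) · 0 = f (2k+3) · p (2k+4) · 0 = p (2k+5) · 0`, which is `f (2k+5)` minus its
last letter. By induction the word of the theorem is `f (2N+1)` minus its last letter.
-/

theorem List.dropLast_dropLast_append_s13 {α : Type*} (l₁ : List α) {l₂ : List α}
    (h : 2 ≤ l₂.length) : (l₁ ++ l₂).dropLast.dropLast = l₁ ++ l₂.dropLast.dropLast := by
  have h₂ : l₂ ≠ [] := List.ne_nil_of_length_pos (by omega)
  have h₂' : l₂.dropLast ≠ [] := List.ne_nil_of_length_pos (by rw [List.length_dropLast]; omega)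
  rw [List.dropLast_append_of_ne_nil h₂, List.dropLast_append_of_ne_nil h₂']

theorem two_le_length_fibWord (n : ℕ) : 2 ≤ (fibWord (n + 3)).length := by
  induction n with
  | zero => decide
  | succ n ih =>
    rw [show fibWord (n + 4) = fibWord (n + 3) ++ fibWord (n + 2) from rfl, List.length_append]
    omega

theorem centralWord_add_five (n : ℕ) :
    centralWord (n + 5) = fibWord (n + 4) ++ centralWord (n + 3) :=
  List.dropLast_dropLast_append_s13 _ (two_le_length_fibWord n)

theorem fibWord_append_centralWord_swap (n : ℕ) :
    fibWord (n + 3) ++ centralWord (n + 4) = fibWord (n + 4) ++ centralWord (n + 3) := by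
  induction n with
  | zero => decide
  | succ n ih =>
    rw [centralWord_add_five, show fibWord (n + 5) = fibWord (n + 4) ++ fibWord (n + 3) from rfl,
      List.append_assoc, ih]

/-- The last two letters of `fibWord n`, for `n ≥ 3`. -/
def fibSuffix (n : ℕ) : List ℕ := if Even n then [1, 0] else [0, 1]

theorem fibSuffix_add_two (n : ℕ) : fibSuffix (n + 2) = fibSuffix n := by
  simp [fibSuffix, Nat.even_add]

theorem fibSuffix_succ (n : ℕ) : fibSuffix (n + 1) = (fibSuffix n).reverse := by
  by_cases h : Even n <;> simp [fibSuffix, h, Nat.even_add_one]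

theorem fibWord_eq_centralWord_append_fibSuffix :
    ∀ n, fibWord (n + 3) = centralWord (n + 3) ++ fibSuffix (n + 3)
  | 0 | 1 => by decide
  | n + 2 => by
    rw [show fibWord (n + 5) = fibWord (n + 4) ++ fibWord (n + 3) from rfl,
      show fibSuffix (n + 5) = fibSuffix (n + 3) from fibSuffix_add_two _,
      fibWord_eq_centralWord_append_fibSuffix n, centralWord_add_five, List.append_assoc]

theorem centralWord_reverse : ∀ n, (centralWord n).reverse = centralWord n
  | 0 | 1 | 2 | 3 | 4 => by decide
  | n + 5 => by
    calc (centralWord (n + 5)).reverse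
        = centralWord (n + 3) ++ (fibSuffix (n + 4)).reverse ++ centralWord (n + 4) := by
          rw [centralWord_add_five, fibWord_eq_centralWord_append_fibSuffix (n + 1)]
          simp only [List.reverse_append, centralWord_reverse (n + 3),
            centralWord_reverse (n + 4), List.append_assoc]
      _ = fibWord (n + 3) ++ centralWord (n + 4) := by
          rw [fibSuffix_succ, List.reverse_reverse, fibWord_eq_centralWord_append_fibSuffix]
      _ = centralWord (n + 5) := by
          rw [fibWord_append_centralWord_swap, centralWord_add_five]

theorem chrisWord_reverse (n : ℕ) : (chrisWord n).reverse = [1] ++ centralWord n ++ [0] := by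
  simp [chrisWord, centralWord_reverse]

theorem fibWord_odd (k : ℕ) : fibWord (2 * k + 3) = centralWord (2 * k + 3) ++ [0, 1] := by
  rw [fibWord_eq_centralWord_append_fibSuffix]
  simp [fibSuffix, Nat.even_add_one]

theorem dropLast_fibWord_odd (k : ℕ) :
    (fibWord (2 * k + 3)).dropLast = centralWord (2 * k + 3) ++ [0] := by
  simp [fibWord_odd]

theorem dropLast_fibWord_odd_append_reverse_chrisWord (k : ℕ) :
    (fibWord (2 * k + 3)).dropLast ++ (chrisWord (2 * k + 4)).reverse
      = (fibWord (2 * k + 5)).dropLast := by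
  calc (fibWord (2 * k + 3)).dropLast ++ (chrisWord (2 * k + 4)).reverse
      = fibWord (2 * k + 3) ++ centralWord (2 * k + 4) ++ [0] := by
        simp [chrisWord_reverse, fibWord_odd]
    _ = centralWord (2 * k + 5) ++ [0] := by
        rw [fibWord_append_centralWord_swap, centralWord_add_five]
    _ = (fibWord (2 * k + 5)).dropLast := (dropLast_fibWord_odd (k + 1)).symm

theorem zero_append_flatten_reverse_chrisWord (k : ℕ) :
    [0] ++ ((List.range k).map (fun i => (chrisWord (2 * (i + 2))).reverse)).flatten
      = (fibWord (2 * k + 3)).dropLast := by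
  induction k with
  | zero => decide
  | succ k ih =>
    rw [List.range_succ, List.map_append, List.flatten_append, ← List.append_assoc, ih]
    simpa [mul_add] using dropLast_fibWord_odd_append_reverse_chrisWord k

theorem stmt13_general (N : ℕ) :
    IsFibPrefix ([0] ++
      ((List.range (N - 1)).map (fun i => (chrisWord (2 * (i + 2))).reverse)).flatten) := by
  rw [zero_append_flatten_reverse_chrisWord]
  exact ⟨2 * (N - 1) + 3, by omega, List.dropLast_prefix _⟩

theorem stmt13 (N : ℕ) (hN : 2 ≤ N) :
    IsFibPrefix ([0] ++
      ((List.range (N - 1)).map (fun i => (chrisWord (2 * (i + 2))).reverse)).flatten) :=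
  stmt13_general N
end
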